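/- (Identification of the backward Whittle–Wiggins–Robinson solution) Let R be an N×N Hermitian positive definite matrix that is block Toeplitz with block size n1. Define the N×n1 matrix Q := [q_{0,N−n1}, q_{0,N−n1+1}, …, q_{0,N−1}], partitioned into n1×n1 block rows Q = [Q_{n2−1}; …; Q_1; Q_0] (block row t from the top, starting at 0, is Q_{n2−1−t}), and let V be the n1×n1 diagonal matrix with diagonal entries v_{0,N−n1}, …, v_{0,N−1}. Suppose n1×n1 complex matrices B_1, …, B_{n2−1} and P_b satisfy the block equation [B_{n2−1}, …, B_1, I] · R = [0, …, 0, P_b]. Then Q_0ᵀ is invertible, B_i = (Q_0ᵀ)⁻¹ Q_iᵀ for each i = 1, …, n2−1, and P_b = (Q_0ᵀ)⁻¹ V (Q_0*)⁻¹, where * denotes entrywise complex conjugation. -/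

import Mathlib

open Matrix
open scoped ComplexOrder

noncomputable section

/-- The `k`-th standard basis vector of `ℂⁿ` (zero if `k ≥ n`). -/
def eVec (n : ℕ) (k : ℕ) : Fin n → ℂ := fun j => if (j : ℕ) = k then 1 else 0

/-- `vᵀ R w`. -/
def bform {n : ℕ} (R : Matrix (Fin n) (Fin n) ℂ) (v w : Fin n → ℂ) : ℂ :=
  v ⬝ᵥ R.mulVec w

/-- Joint recursion computing the pair `(p_{k,k+d}, q_{k,k+d})`. -/
def pqAux {n : ℕ} (R : Matrix (Fin n) (Fin n) ℂ) : ℕ → ℕ → (Fin n → ℂ) × (Fin n → ℂ)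
  | 0, k => (eVec n k, eVec n k)
  | d + 1, k =>
      let p := (pqAux R d k).1
      let q := (pqAux R d (k + 1)).2
      let l := k + d + 1
      let a := bform R p (eVec n l) / bform R q (eVec n l)
      let a' := bform R q (eVec n k) / bform R p (eVec n k)
      (p - a • q, q - a' • p)

/-- The orthogonal polynomial `p_{k,l}`. -/
def pVec {n : ℕ} (R : Matrix (Fin n) (Fin n) ℂ) (k l : ℕ) : Fin n → ℂ :=
  (pqAux R (l - k) k).1

/-- The orthogonal polynomial `q_{k,l}`. -/
def qVec {n : ℕ} (R : Matrix (Fin n) (Fin n) ℂ) (k l : ℕ) : Fin n → ℂ :=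
  (pqAux R (l - k) k).2

/-- The generalized reflection coefficient `a_{k,l}`. -/
def aCoef {n : ℕ} (R : Matrix (Fin n) (Fin n) ℂ) (k l : ℕ) : ℂ :=
  bform R (pVec R k (l - 1)) (eVec n l) / bform R (qVec R (k + 1) l) (eVec n l)

/-- The generalized reflection coefficient `a'_{k,l}`. -/
def aCoef' {n : ℕ} (R : Matrix (Fin n) (Fin n) ℂ) (k l : ℕ) : ℂ :=
  bform R (qVec R (k + 1) l) (eVec n k) / bform R (pVec R k (l - 1)) (eVec n k)

/-- `v_{k,l} = q_{k,l}ᵀ R e_l`. -/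
def vSc {n : ℕ} (R : Matrix (Fin n) (Fin n) ℂ) (k l : ℕ) : ℂ :=
  bform R (qVec R k l) (eVec n l)

/-- `v'_{k,l} = p_{k,l}ᵀ R e_k`. -/
def vSc' {n : ℕ} (R : Matrix (Fin n) (Fin n) ℂ) (k l : ℕ) : ℂ :=
  bform R (pVec R k l) (eVec n k)

/-- The `m`-th coordinate of `q_{k,l}` (zero if out of range). -/
def qCoord {n : ℕ} (R : Matrix (Fin n) (Fin n) ℂ) (k l m : ℕ) : ℂ :=
  if h : m < n then qVec R k l ⟨m, h⟩ else 0

/-- The block `Q_m`, i.e. the `(n2-1-m)`-th block row (from the top) of the `N × n1`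
matrix `Q = [q_{0,N-n1}, …, q_{0,N-1}]`. -/
def QBlock (n1 n2 : ℕ) (R : Matrix (Fin (n1 * n2)) (Fin (n1 * n2)) ℂ) (m : ℕ) :
    Matrix (Fin n1) (Fin n1) ℂ :=
  Matrix.of fun u k =>
    qCoord R 0 (n1 * n2 - n1 + (k : ℕ)) ((n2 - 1 - m) * n1 + (u : ℕ))

lemma bform_eVec {n : ℕ} (R : Matrix (Fin n) (Fin n) ℂ) (x : Fin n → ℂ) (j : Fin n) :
    bform R x (eVec n (j : ℕ)) = (vecMul x R) j := by
  simp only [bform, eVec, dotProduct, mulVec, vecMul]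
  congr 1; ext i
  rw [Finset.sum_eq_single j]
  · simp
  · intro b _ hb; simp [Fin.val_eq_val, hb]
  · simp

lemma bform_star_pos {n : ℕ} {R : Matrix (Fin n) (Fin n) ℂ} (hR : R.PosDef)
    (x : Fin n → ℂ) (hx : x ≠ 0) : 0 < x ⬝ᵥ R *ᵥ (star x) := by
  have hsx : star x ≠ 0 := by
    intro h; apply hx; ext i
    have := congrFun h i; simpa [Pi.star_apply, star_eq_zero] using this
  have := hR.dotProduct_mulVec_pos hsx
  simpa using this

lemma key_pos {n : ℕ} {R : Matrix (Fin n) (Fin n) ℂ} (hR : R.PosDef)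
    {m : ℕ} (hm : m < n) (x : Fin n → ℂ) (hx1 : x ⟨m, hm⟩ = 1)
    (horth : ∀ j : Fin n, (j : ℕ) ≠ m → x j = 0 ∨ bform R x (eVec n (j : ℕ)) = 0) :
    0 < bform R x (eVec n m) := by
  have hx0 : x ≠ 0 := by
    intro h; rw [h] at hx1; simp at hx1
  have hpos := bform_star_pos hR x hx0
  rw [dotProduct_mulVec] at hpos
  have hsum : (vecMul x R) ⬝ᵥ star x = bform R x (eVec n m) := by
    rw [dotProduct]
    rw [Finset.sum_eq_single (⟨m, hm⟩ : Fin n)]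
    · rw [← bform_eVec]; simp [hx1]
    · intro b _ hb
      have hb' : (b : ℕ) ≠ m := by
        intro h; apply hb; exact Fin.ext h
      rcases horth b hb' with h | h
      · simp [h]
      · rw [← bform_eVec] at *; simp [h]
    · simp
  rw [hsum] at hpos; exact hpos
lemma pVec_self {n : ℕ} (R : Matrix (Fin n) (Fin n) ℂ) (k : ℕ) :
    pVec R k k = eVec n k := by simp [pVec, pqAux]
lemma qVec_self {n : ℕ} (R : Matrix (Fin n) (Fin n) ℂ) (k : ℕ) :
    qVec R k k = eVec n k := by simp [qVec, pqAux]

lemma pVec_succ {n : ℕ} (R : Matrix (Fin n) (Fin n) ℂ) (k d : ℕ) :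
    pVec R k (k+d+1) = pVec R k (k+d) -
      (bform R (pVec R k (k+d)) (eVec n (k+d+1)) /
        bform R (qVec R (k+1) (k+d+1)) (eVec n (k+d+1))) • qVec R (k+1) (k+d+1) := by
  have e1 : pVec R k (k+d) = (pqAux R d k).1 := by
    rw [pVec, Nat.add_sub_cancel_left]
  have e2 : qVec R (k+1) (k+d+1) = (pqAux R d (k+1)).2 := by
    rw [qVec, show k+d+1-(k+1) = d from by omega]
  rw [pVec, show k+d+1-k = d+1 from by omega]
  show (pqAux R d k).1 - _ • _ = _
  rw [e1, e2]

lemma qVec_succ {n : ℕ} (R : Matrix (Fin n) (Fin n) ℂ) (k d : ℕ) :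
    qVec R k (k+d+1) = qVec R (k+1) (k+d+1) -
      (bform R (qVec R (k+1) (k+d+1)) (eVec n k) /
        bform R (pVec R k (k+d)) (eVec n k)) • pVec R k (k+d) := by
  have e1 : pVec R k (k+d) = (pqAux R d k).1 := by
    rw [pVec, Nat.add_sub_cancel_left]
  have e2 : qVec R (k+1) (k+d+1) = (pqAux R d (k+1)).2 := by
    rw [qVec, show k+d+1-(k+1) = d from by omega]
  rw [qVec, show k+d+1-k = d+1 from by omega]
  show (pqAux R d (k+1)).2 - _ • _ = _
  rw [e1, e2]
lemma bform_sub {n : ℕ} (R : Matrix (Fin n) (Fin n) ℂ) (x y w : Fin n → ℂ) :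
    bform R (x - y) w = bform R x w - bform R y w := by
  simp [bform, sub_dotProduct]

lemma bform_smul {n : ℕ} (R : Matrix (Fin n) (Fin n) ℂ) (c : ℂ) (x w : Fin n → ℂ) :
    bform R (c • x) w = c * bform R x w := by
  simp [bform, smul_dotProduct, smul_eq_mul]

lemma good {n : ℕ} {R : Matrix (Fin n) (Fin n) ℂ} (hR : R.PosDef) :
    ∀ d k : ℕ, k + d < n →
      (∀ j : Fin n, ¬(k ≤ (j : ℕ) ∧ (j : ℕ) ≤ k + d) → pVec R k (k+d) j = 0) ∧
      (∀ j : Fin n, ¬(k ≤ (j : ℕ) ∧ (j : ℕ) ≤ k + d) → qVec R k (k+d) j = 0) ∧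
      (∀ j : Fin n, (j : ℕ) = k → pVec R k (k+d) j = 1) ∧
      (∀ j : Fin n, (j : ℕ) = k + d → qVec R k (k+d) j = 1) ∧
      (∀ j : ℕ, k < j → j ≤ k + d → bform R (pVec R k (k+d)) (eVec n j) = 0) ∧
      (∀ j : ℕ, k ≤ j → j < k + d → bform R (qVec R k (k+d)) (eVec n j) = 0) := by
  intro d
  induction d with
  | zero =>
    intro k hk
    refine ⟨?_, ?_, ?_, ?_, ?_, ?_⟩ <;>
      simp_all [pVec_self, qVec_self, eVec] <;> intro j h1 h2 <;> omega
  | succ d ih =>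
    intro k hk
    obtain ⟨hp1, hq1, hp2, hq2, hp3, hq3⟩ := ih k (by omega)
    obtain ⟨hp1', hq1', hp2', hq2', hp3', hq3'⟩ := ih (k+1) (by omega)
    have hkd1 : k + 1 + d = k + d + 1 := by omega
    rw [hkd1] at hp1' hq1' hp2' hq2' hp3' hq3'
    have hln : k + d + 1 < n := by omega
    -- positivity of the two denominators
    have hqpos : 0 < bform R (qVec R (k+1) (k+d+1)) (eVec n (k+d+1)) := by
      apply key_pos hR hln
      · exact hq2' ⟨k+d+1, hln⟩ rfl
      · intro j hj
        by_cases hjr : k + 1 ≤ (j:ℕ) ∧ (j:ℕ) ≤ k + d + 1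
        · exact Or.inr (hq3' j hjr.1 (by omega))
        · exact Or.inl (hq1' j hjr)
    have hppos : 0 < bform R (pVec R k (k+d)) (eVec n k) := by
      apply key_pos hR (show k < n by omega)
      · exact hp2 ⟨k, by omega⟩ rfl
      · intro j hj
        by_cases hjr : k ≤ (j:ℕ) ∧ (j:ℕ) ≤ k + d
        · exact Or.inr (hp3 j (by omega) hjr.2)
        · exact Or.inl (hp1 j hjr)
    have hqne := ne_of_gt hqpos
    have hpne := ne_of_gt hppos
    rw [show k + (d+1) = k + d + 1 from rfl] at *
    set a := bform R (pVec R k (k+d)) (eVec n (k+d+1)) /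
        bform R (qVec R (k+1) (k+d+1)) (eVec n (k+d+1)) with ha
    set a' := bform R (qVec R (k+1) (k+d+1)) (eVec n k) /
        bform R (pVec R k (k+d)) (eVec n k) with ha'
    have hp : pVec R k (k+d+1) = pVec R k (k+d) - a • qVec R (k+1) (k+d+1) :=
      pVec_succ R k d
    have hq : qVec R k (k+d+1) = qVec R (k+1) (k+d+1) - a' • pVec R k (k+d) :=
      qVec_succ R k d
    refine ⟨?_, ?_, ?_, ?_, ?_, ?_⟩
    · intro j hj
      rw [hp]
      have h1 : pVec R k (k+d) j = 0 := hp1 j (by omega)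
      have h2 : qVec R (k+1) (k+d+1) j = 0 := hq1' j (by omega)
      simp [h1, h2]
    · intro j hj
      rw [hq]
      have h1 : pVec R k (k+d) j = 0 := hp1 j (by omega)
      have h2 : qVec R (k+1) (k+d+1) j = 0 := hq1' j (by omega)
      simp [h1, h2]
    · intro j hj
      rw [hp]
      have h1 : pVec R k (k+d) j = 1 := hp2 j hj
      have h2 : qVec R (k+1) (k+d+1) j = 0 := hq1' j (by omega)
      simp [h1, h2]
    · intro j hj
      rw [hq]
      have h1 : pVec R k (k+d) j = 0 := hp1 j (by omega)
      have h2 : qVec R (k+1) (k+d+1) j = 1 := hq2' j hj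
      simp [h1, h2]
    · intro j hj1 hj2
      rw [hp, bform_sub, bform_smul]
      rcases Nat.lt_or_ge j (k+d+1) with h | h
      · rw [hp3 j hj1 (by omega), hq3' j (by omega) h, mul_zero, sub_zero]
      · have hj : j = k+d+1 := by omega
        subst hj
        rw [ha, div_mul_cancel₀ _ hqne, sub_self]
    · intro j hj1 hj2
      rw [hq, bform_sub, bform_smul]
      rcases Nat.lt_or_ge k j with h | h
      · rw [hq3' j (by omega) (by omega), hp3 j h (by omega), mul_zero, sub_zero]
      · have hj : j = k := by omega
        subst hj
        rw [ha', div_mul_cancel₀ _ hpne, sub_self]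
lemma q0_supp {n : ℕ} {R : Matrix (Fin n) (Fin n) ℂ} (hR : R.PosDef) {l : ℕ} (hl : l < n)
    (j : Fin n) (hj : l < (j : ℕ)) : qVec R 0 l j = 0 := by
  obtain ⟨-, h, -⟩ := good hR l 0 (by omega)
  have := h j (by omega)
  simpa using this

lemma q0_lead {n : ℕ} {R : Matrix (Fin n) (Fin n) ℂ} (hR : R.PosDef) {l : ℕ} (hl : l < n)
    (j : Fin n) (hj : (j : ℕ) = l) : qVec R 0 l j = 1 := by
  obtain ⟨-, -, -, h, -⟩ := good hR l 0 (by omega)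
  have := h j (by omega)
  simpa using this

lemma q0_orth {n : ℕ} {R : Matrix (Fin n) (Fin n) ℂ} (hR : R.PosDef) {l : ℕ} (hl : l < n)
    (j : ℕ) (hj : j < l) : bform R (qVec R 0 l) (eVec n j) = 0 := by
  obtain ⟨-, -, -, -, -, h⟩ := good hR l 0 (by omega)
  have := h j (by omega) (by omega)
  simpa using this

lemma q0_v_pos {n : ℕ} {R : Matrix (Fin n) (Fin n) ℂ} (hR : R.PosDef) {l : ℕ} (hl : l < n) :
    0 < bform R (qVec R 0 l) (eVec n l) := by
  apply key_pos hR hl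
  · exact q0_lead hR hl ⟨l, hl⟩ rfl
  · intro j hj
    rcases Nat.lt_or_ge l (j : ℕ) with h | h
    · exact Or.inl (q0_supp hR hl j h)
    · exact Or.inr (q0_orth hR hl j (by omega))

lemma sum_lastblock {N n1 : ℕ} (hle : n1 ≤ N) (f : Fin N → ℂ)
    (h0 : ∀ j : Fin N, (j : ℕ) < N - n1 → f j = 0) :
    ∑ j, f j = ∑ k : Fin n1, f ⟨N - n1 + (k : ℕ), by omega⟩ := by
  set g : ℕ → ℂ := fun i => if h : i < N then f ⟨i, h⟩ else 0 with hg
  have h1 : ∑ j, f j = ∑ i ∈ Finset.range N, g i := by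
    rw [← Fin.sum_univ_eq_sum_range]
    apply Finset.sum_congr rfl
    intro i _
    simp [hg, i.isLt]
  have h2 : ∑ k : Fin n1, f ⟨N - n1 + (k : ℕ), by omega⟩
      = ∑ i ∈ Finset.range n1, g (N - n1 + i) := by
    rw [← Fin.sum_univ_eq_sum_range (fun i => g (N - n1 + i))]
    apply Finset.sum_congr rfl
    intro i _
    have : N - n1 + (i : ℕ) < N := by omega
    simp [hg, this]
  rw [h1, h2]
  rw [Finset.range_eq_Ico, ← Finset.sum_Ico_consecutive g (Nat.zero_le (N - n1)) (by omega : N - n1 ≤ N)]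
  have hz : ∑ i ∈ Finset.Ico 0 (N - n1), g i = 0 := by
    apply Finset.sum_eq_zero
    intro i hi
    simp only [Finset.mem_Ico] at hi
    have hiN : i < N := by omega
    simp [hg, hiN, h0 ⟨i, hiN⟩ hi.2]
  rw [hz, zero_add, Finset.sum_Ico_eq_sum_range,
    show N - (N - n1) = n1 from by omega, Finset.range_eq_Ico]

lemma bform_conj_symm {n : ℕ} {R : Matrix (Fin n) (Fin n) ℂ} (hR : R.IsHermitian)
    (x y : Fin n → ℂ) :
    x ⬝ᵥ R *ᵥ (star y) = (starRingEnd ℂ) (y ⬝ᵥ R *ᵥ (star x)) := by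
  simp only [dotProduct, mulVec, dotProduct, Finset.mul_sum, map_sum, _root_.map_mul,
    Pi.star_apply, RingHomCompTriple.comp_apply]
  rw [Finset.sum_comm]
  apply Finset.sum_congr rfl
  intro i _
  apply Finset.sum_congr rfl
  intro j _
  have hij : R j i = (starRingEnd ℂ) (R i j) := by
    have := hR.apply i j
    simpa [Matrix.conjTranspose_apply] using (congrArg star this.symm).symm
  rw [hij]
  simp [Complex.conj_conj]
  ring

/-- Identification of the backward Whittle–Wiggins–Robinson solution: if
`[B_{n2-1}, …, B_1, I] R = [0, …, 0, P_b]`, then `Q_0ᵀ` is invertible,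
`B_i = (Q_0ᵀ)⁻¹ Q_iᵀ`, and `P_b = (Q_0ᵀ)⁻¹ V (Q_0*)⁻¹`. -/
theorem stmt16 (n1 n2 : ℕ) (h1 : 1 ≤ n1) (h2 : 1 ≤ n2)
    (R : Matrix (Fin (n1 * n2)) (Fin (n1 * n2)) ℂ) (hR : R.PosDef)
    (hBT : ∀ (i j : ℕ) (hi : i + n1 < n1 * n2) (hj : j + n1 < n1 * n2),
      R ⟨i + n1, hi⟩ ⟨j + n1, hj⟩ =
        R ⟨i, Nat.lt_of_le_of_lt (Nat.le_add_right i n1) hi⟩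
          ⟨j, Nat.lt_of_le_of_lt (Nat.le_add_right j n1) hj⟩)
    (B : ℕ → Matrix (Fin n1) (Fin n1) ℂ) (Pb : Matrix (Fin n1) (Fin n1) ℂ)
    (hB0 : B 0 = 1)
    (hEq : (Matrix.of fun (a : Fin n1) (j : Fin (n1 * n2)) =>
          B (n2 - 1 - (j : ℕ) / n1) a ⟨(j : ℕ) % n1, Nat.mod_lt _ h1⟩) * R =
        Matrix.of fun (a : Fin n1) (j : Fin (n1 * n2)) =>
          if (j : ℕ) / n1 = n2 - 1 then Pb a ⟨(j : ℕ) % n1, Nat.mod_lt _ h1⟩ else 0) :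
    IsUnit (QBlock n1 n2 R 0)ᵀ ∧
    (∀ i : ℕ, 1 ≤ i → i ≤ n2 - 1 →
      B i = (QBlock n1 n2 R 0)ᵀ⁻¹ * (QBlock n1 n2 R i)ᵀ) ∧
    Pb = (QBlock n1 n2 R 0)ᵀ⁻¹ *
        Matrix.diagonal (fun k : Fin n1 => vSc R 0 (n1 * n2 - n1 + (k : ℕ))) *
        ((QBlock n1 n2 R 0).map (starRingEnd ℂ))⁻¹ := by
  have hN : n1 ≤ n1 * n2 := Nat.le_mul_of_pos_right n1 h2
  have hsub : n1 * n2 - n1 = (n2 - 1) * n1 := by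
    rw [Nat.sub_mul, one_mul, Nat.mul_comm]
  -- basic index arithmetic
  have hjlt : ∀ m : ℕ, ∀ u : Fin n1, (n2 - 1 - m) * n1 + (u : ℕ) < n1 * n2 := by
    intro m u
    have hb : (n2 - 1 - m) * n1 ≤ (n2 - 1) * n1 :=
      Nat.mul_le_mul_right n1 (by omega)
    have := u.isLt
    omega
  have hdiv : ∀ m : ℕ, ∀ u : Fin n1, ((n2 - 1 - m) * n1 + (u : ℕ)) / n1 = n2 - 1 - m := by
    intro m u
    rw [Nat.add_comm, Nat.add_mul_div_right _ _ (by omega : 0 < n1),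
      Nat.div_eq_of_lt u.isLt, Nat.zero_add]
  have hmod : ∀ m : ℕ, ∀ u : Fin n1, ((n2 - 1 - m) * n1 + (u : ℕ)) % n1 = (u : ℕ) := by
    intro m u
    rw [Nat.add_comm, Nat.add_mul_mod_self_right, Nat.mod_eq_of_lt u.isLt]
  -- the triangular factorization
  set S : Matrix (Fin (n1*n2)) (Fin (n1*n2)) ℂ :=
    Matrix.of (fun i l => qVec R 0 (l : ℕ) i) with hS
  set T := Sᵀ * R with hT
  have hTe : ∀ l j : Fin (n1*n2), T l j = bform R (qVec R 0 (l : ℕ)) (eVec (n1*n2) (j : ℕ)) := by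
    intro l j
    rw [bform_eVec, hT, Matrix.mul_apply]
    simp [hS, Matrix.vecMul, dotProduct, Matrix.transpose_apply]
  have hStri : S.BlockTriangular id := by
    intro i j hij
    exact q0_supp hR j.isLt i hij
  have hSdet : S.det = 1 := by
    rw [Matrix.det_of_upperTriangular hStri]
    have : ∀ i : Fin (n1*n2), S i i = 1 := fun i => q0_lead hR i.isLt i rfl
    simp [this]
  have hTtri : T.BlockTriangular id := by
    intro i j hij
    rw [hTe]
    exact q0_orth hR i.isLt j hij
  have hTdetu : IsUnit T.det := by
    rw [Matrix.det_of_upperTriangular hTtri, isUnit_iff_ne_zero, Finset.prod_ne_zero_iff]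
    intro i _
    rw [hTe]
    exact ne_of_gt (q0_v_pos hR i.isLt)
  have hRdetu : IsUnit R.det := by
    have hd : T.det = Sᵀ.det * R.det := by rw [hT, Matrix.det_mul]
    rw [hd] at hTdetu
    exact isUnit_of_mul_isUnit_right hTdetu
  set Mrow : Matrix (Fin n1) (Fin (n1*n2)) ℂ :=
    Matrix.of (fun a j => B (n2 - 1 - (j : ℕ) / n1) a ⟨(j : ℕ) % n1, Nat.mod_lt _ h1⟩) with hMrow
  set Z : Matrix (Fin n1) (Fin (n1*n2)) ℂ :=
    Matrix.of (fun a j => if (j : ℕ) / n1 = n2 - 1 then Pb a ⟨(j : ℕ) % n1, Nat.mod_lt _ h1⟩ else 0) with hZdef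
  have hEq' : Mrow * R = Z := hEq
  set Z' := Z * T⁻¹ with hZ'def
  have hZT : Z' * T = Z := by
    rw [hZ'def, Matrix.mul_assoc, Matrix.nonsing_inv_mul T hTdetu, Matrix.mul_one]
  have hMfact : Mrow = Z' * Sᵀ := by
    have hfac : Z' * Sᵀ * R = Z := by
      rw [Matrix.mul_assoc, ← hT, hZT]
    calc Mrow = Mrow * R * R⁻¹ := (Matrix.mul_nonsing_inv_cancel_right R Mrow hRdetu).symm
      _ = Z' * Sᵀ * R * R⁻¹ := by rw [hEq', hfac]
      _ = Z' * Sᵀ := Matrix.mul_nonsing_inv_cancel_right R _ hRdetu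
  have hZ'0 : ∀ (a : Fin n1) (j : Fin (n1*n2)), (j : ℕ) < n1*n2 - n1 → Z' a j = 0 := by
    intro a j hj
    haveI : Invertible T := T.invertibleOfIsUnitDet hTdetu
    have hTitri : T⁻¹.BlockTriangular id := Matrix.blockTriangular_inv_of_blockTriangular hTtri
    rw [hZ'def, Matrix.mul_apply]
    apply Finset.sum_eq_zero
    intro l _
    by_cases hl : (l : ℕ) / n1 = n2 - 1
    · have hlge : n1*n2 - n1 ≤ (l : ℕ) := by
        have hdm := Nat.div_mul_le_self (l : ℕ) n1
        rw [hl] at hdm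
        rw [hsub]; exact hdm
      have : T⁻¹ l j = 0 := hTitri (show (j : ℕ) < (l : ℕ) by omega)
      rw [this, mul_zero]
    · have : Z a l = 0 := by simp [hZdef, hl]
      rw [this, zero_mul]
  -- the coefficient matrix
  set C : Matrix (Fin n1) (Fin n1) ℂ :=
    Matrix.of (fun a k => Z' a ⟨n1*n2 - n1 + (k : ℕ), by have := k.isLt; omega⟩) with hC
  -- entrywise identification of B blocks
  have hBm : ∀ m : ℕ, m ≤ n2 - 1 → B m = C * (QBlock n1 n2 R m)ᵀ := by
    intro m hm
    ext a u
    set j : Fin (n1*n2) := ⟨(n2 - 1 - m) * n1 + (u : ℕ), hjlt m u⟩ with hj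
    have h1' : Mrow a j = B m a u := by
      simp only [hMrow, Matrix.of_apply]
      congr 1
      · rw [hdiv m u]; omega
      · exact Fin.ext (hmod m u)
    have h2' : Mrow a j = ∑ k : Fin n1, C a k * QBlock n1 n2 R m u k := by
      rw [hMfact, Matrix.mul_apply]
      rw [sum_lastblock hN (fun l => Z' a l * Sᵀ l j)
        (fun l hl => by simp [hZ'0 a l hl])]
      apply Finset.sum_congr rfl
      intro k _
      simp only [Matrix.transpose_apply, hS, hC, Matrix.of_apply, QBlock, qCoord,
        dif_pos (hjlt m u)]
      rfl
    rw [Matrix.mul_apply]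
    rw [← h1', h2']
    apply Finset.sum_congr rfl
    intro k _
    rw [Matrix.transpose_apply]

  -- Q0 is upper triangular with unit diagonal
  have hQ0 : ∀ u k : Fin n1, QBlock n1 n2 R 0 u k =
      qVec R 0 (n1*n2 - n1 + (k : ℕ)) ⟨n1*n2 - n1 + (u : ℕ), by have := u.isLt; omega⟩ := by
    intro u k
    simp only [QBlock, Matrix.of_apply, qCoord, dif_pos (hjlt 0 u)]
    have hv : (n2 - 1 - 0) * n1 + (u : ℕ) = n1*n2 - n1 + (u : ℕ) := by
      simp only [Nat.sub_zero]; omega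
    exact congrArg _ (Fin.ext hv)
  have hQ0tri : (QBlock n1 n2 R 0).BlockTriangular id := by
    intro u k huk
    have hku : (k : ℕ) < (u : ℕ) := huk
    rw [hQ0]
    exact q0_supp hR (by have := k.isLt; omega) _ (by simp; omega)
  have hQ0diag : ∀ u, QBlock n1 n2 R 0 u u = 1 := by
    intro u; rw [hQ0]; exact q0_lead hR (by have := u.isLt; omega) _ rfl
  have hQ0det : (QBlock n1 n2 R 0).det = 1 := by
    rw [Matrix.det_of_upperTriangular hQ0tri]; simp [hQ0diag]
  have hUnit : IsUnit (QBlock n1 n2 R 0)ᵀ := by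
    rw [Matrix.isUnit_iff_isUnit_det, Matrix.det_transpose, hQ0det]
    exact isUnit_one
  have hCQ : C * (QBlock n1 n2 R 0)ᵀ = 1 := by rw [← hBm 0 (by omega), hB0]
  have hCinv : ((QBlock n1 n2 R 0)ᵀ)⁻¹ = C := Matrix.inv_eq_left_inv hCQ
  refine ⟨hUnit, ?_, ?_⟩
  · intro i hi1 hi2
    rw [hBm i hi2, hCinv]
  -- the Pb identity
  set emb : Fin n1 → Fin (n1*n2) := fun k => ⟨n1*n2 - n1 + (k : ℕ), by have := k.isLt; omega⟩
    with hemb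
  set Tb : Matrix (Fin n1) (Fin n1) ℂ := Matrix.of (fun k u => T (emb k) (emb u)) with hTb
  have hembval : ∀ u : Fin n1, ((emb u : ℕ)) = (n2-1) * n1 + (u : ℕ) := by
    intro u; simp only [hemb]; omega
  have hPbe : ∀ (a u : Fin n1), Z a (emb u) = Pb a u := by
    intro a u
    have hd0 := hdiv 0 u
    have hm0 := hmod 0 u
    simp only [Nat.sub_zero] at hd0 hm0
    have hd : ((emb u : ℕ)) / n1 = n2 - 1 := by rw [hembval]; exact hd0
    have hm : ((emb u : ℕ)) % n1 = (u : ℕ) := by rw [hembval]; exact hm0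
    simp only [hZdef, Matrix.of_apply, if_pos hd]
    exact congrArg _ (Fin.ext hm)
  have hPb1 : Pb = C * Tb := by
    ext a u
    rw [← hPbe a u, ← hZT, Matrix.mul_apply, Matrix.mul_apply]
    rw [sum_lastblock hN (fun l => Z' a l * T l (emb u))
      (fun l hl => by simp [hZ'0 a l hl])]
    apply Finset.sum_congr rfl
    intro k _
    rfl
  -- the Gram identity
  have hG : ∀ k k' : Fin n1, (Tb * (QBlock n1 n2 R 0).map (starRingEnd ℂ)) k k'
      = qVec R 0 (n1*n2 - n1 + (k : ℕ)) ⬝ᵥ R *ᵥ star (qVec R 0 (n1*n2 - n1 + (k' : ℕ))) := by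
    intro k k'
    rw [Matrix.mul_apply, Matrix.dotProduct_mulVec, dotProduct]
    rw [sum_lastblock hN
      (fun j => Matrix.vecMul (qVec R 0 (n1*n2 - n1 + (k : ℕ))) R j *
        (star (qVec R 0 (n1*n2 - n1 + (k' : ℕ)))) j)
      (fun j hj => by
        have h0 : Matrix.vecMul (qVec R 0 (n1*n2 - n1 + (k : ℕ))) R j = 0 := by
          rw [← bform_eVec]
          exact q0_orth hR (by have := k.isLt; omega) _ (by have := k.isLt; omega)
        simp [h0])]
    apply Finset.sum_congr rfl
    intro u _
    have e1 : Tb k u = Matrix.vecMul (qVec R 0 (n1*n2 - n1 + (k : ℕ))) R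
        ⟨n1*n2 - n1 + (u : ℕ), by have := u.isLt; omega⟩ := by
      rw [← bform_eVec, hTb]
      simp only [Matrix.of_apply]
      rw [hTe]
    have e2 : ((QBlock n1 n2 R 0).map (starRingEnd ℂ)) u k'
        = (star (qVec R 0 (n1*n2 - n1 + (k' : ℕ))))
            ⟨n1*n2 - n1 + (u : ℕ), by have := u.isLt; omega⟩ := by
      simp only [Matrix.map_apply, hQ0 u k', Pi.star_apply]
      rfl
    rw [e1, e2]
  have hzero : ∀ k k' : Fin n1, (k' : ℕ) < (k : ℕ) →
      (Tb * (QBlock n1 n2 R 0).map (starRingEnd ℂ)) k k' = 0 := by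
    intro k k' hkk
    rw [Matrix.mul_apply]
    apply Finset.sum_eq_zero
    intro u _
    rcases Nat.lt_or_ge (u : ℕ) (k : ℕ) with h | h
    · have : Tb k u = 0 := by
        rw [hTb]
        simp only [Matrix.of_apply]
        rw [hTe]
        have : ((emb u : ℕ)) < n1*n2 - n1 + (k : ℕ) := by simp only [hemb]; omega
        exact q0_orth hR (by have := k.isLt; simp only [hemb]; omega) _ this
      rw [this, zero_mul]
    · have : QBlock n1 n2 R 0 u k' = 0 := hQ0tri (show (k' : ℕ) < (u : ℕ) by omega)
      simp [Matrix.map_apply, this]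
  have hGdiag : Tb * (QBlock n1 n2 R 0).map (starRingEnd ℂ)
      = Matrix.diagonal (fun k : Fin n1 => vSc R 0 (n1 * n2 - n1 + (k : ℕ))) := by
    ext k k'
    rcases lt_trichotomy (k' : ℕ) (k : ℕ) with h | h | h
    · rw [hzero k k' h, Matrix.diagonal_apply_ne' _ (by intro hc; rw [hc] at h; omega)]
    · have hkk : k = k' := Fin.ext h.symm
      subst hkk
      rw [Matrix.diagonal_apply_eq, Matrix.mul_apply]
      rw [Finset.sum_eq_single k]
      · have e1 : Tb k k = vSc R 0 (n1*n2 - n1 + (k : ℕ)) := by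
          rw [hTb]
          simp only [Matrix.of_apply]
          rw [hTe, vSc]
        have e2 : ((QBlock n1 n2 R 0).map (starRingEnd ℂ)) k k = 1 := by
          simp [Matrix.map_apply, hQ0diag k]
        rw [e1, e2, mul_one]
      · intro u _ hu
        rcases Nat.lt_or_ge (u : ℕ) (k : ℕ) with h' | h'
        · have : Tb k u = 0 := by
            rw [hTb]
            simp only [Matrix.of_apply]
            rw [hTe]
            have : ((emb u : ℕ)) < n1*n2 - n1 + (k : ℕ) := by simp only [hemb]; omega
            exact q0_orth hR (by have := k.isLt; simp only [hemb]; omega) _ this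
          rw [this, zero_mul]
        · have hku : (k : ℕ) < (u : ℕ) := by
            rcases Nat.lt_or_ge (k : ℕ) (u : ℕ) with h'' | h''
            · exact h''
            · exact absurd (Fin.ext (by omega)) hu
          have : QBlock n1 n2 R 0 u k = 0 := hQ0tri hku
          simp [Matrix.map_apply, this]
      · intro hk; exact absurd (Finset.mem_univ k) hk
    · rw [hG k k', bform_conj_symm hR.1, ← hG k' k, hzero k' k h, map_zero]
      exact (Matrix.diagonal_apply_ne _ (show k ≠ k' by intro hc; rw [hc] at h; omega)).symm
  have hQcdet : IsUnit ((QBlock n1 n2 R 0).map (starRingEnd ℂ)).det := by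
    have hmc : (QBlock n1 n2 R 0).map (starRingEnd ℂ) = ((QBlock n1 n2 R 0)ᴴ)ᵀ := by
      ext i j
      simp [Matrix.conjTranspose_apply, Matrix.map_apply]
    rw [hmc, Matrix.det_transpose, Matrix.det_conjTranspose, hQ0det]
    simp
  have hTbV : Tb = Matrix.diagonal (fun k : Fin n1 => vSc R 0 (n1 * n2 - n1 + (k : ℕ))) *
      ((QBlock n1 n2 R 0).map (starRingEnd ℂ))⁻¹ := by
    rw [← hGdiag, Matrix.mul_nonsing_inv_cancel_right _ _ hQcdet]
  rw [hPb1, hTbV, hCinv, Matrix.mul_assoc]
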